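/- arXiv:2107.02023 — 4 statements merged into one kernel-verified Lean document; each statement's English description precedes it below -/
import Mathlib

section
/- Let (η_k)_{k∈ℕ₀} be a sequence of nonnegative reals. Then the following are equivalent: (i) there exist constants C_lin ≥ 1 and 0 < ρ_lin < 1 such that η_{k+j}² ≤ C_lin ρ_lin^j η_k² for all j, k ∈ ℕ₀; (ii) there exists a constant C' > 0 such that ∑_{j=k+1}^∞ η_j² ≤ C' η_k² for all k ∈ ℕ₀. -/
/-- Equivalent reformulation of linear convergence: for a sequence `(η_k)` of
nonnegative reals, linear convergence `η_{k+j}² ≤ C_lin ρ_lin^j η_k²` is equivalent to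
the summability of the tails controlled by the current value,
`∑_{j=k+1}^∞ η_j² ≤ C' η_k²`. -/
theorem linear_convergence_iff_tail_bound (η : ℕ → ℝ) (hη : ∀ k, 0 ≤ η k) :
    (∃ Clin ρlin : ℝ, 1 ≤ Clin ∧ 0 < ρlin ∧ ρlin < 1 ∧
        ∀ j k : ℕ, η (k + j) ^ 2 ≤ Clin * ρlin ^ j * η k ^ 2) ↔
      (∃ C' : ℝ, 0 < C' ∧ ∀ k : ℕ,
        (Summable fun j : ℕ => η (k + 1 + j) ^ 2) ∧
          ∑' j : ℕ, η (k + 1 + j) ^ 2 ≤ C' * η k ^ 2) := by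
  constructor
  · rintro ⟨C, ρ, hC, hρ0, hρ1, h⟩
    have h1ρ : 0 < 1 - ρ := by linarith
    refine ⟨C * ρ / (1 - ρ), by positivity, fun k => ?_⟩
    have hb : ∀ j : ℕ, η (k + 1 + j) ^ 2 ≤ (C * ρ * η k ^ 2) * ρ ^ j := by
      intro j
      have h2 := h (1 + j) k
      rw [← add_assoc] at h2
      calc η (k + 1 + j) ^ 2 ≤ C * ρ ^ (1 + j) * η k ^ 2 := h2
        _ = (C * ρ * η k ^ 2) * ρ ^ j := by rw [pow_add, pow_one]; ring
    have hgeo : Summable fun j : ℕ => (C * ρ * η k ^ 2) * ρ ^ j :=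
      (summable_geometric_of_lt_one hρ0.le hρ1).mul_left _
    have hsum : Summable fun j : ℕ => η (k + 1 + j) ^ 2 :=
      Summable.of_nonneg_of_le (fun j => sq_nonneg _) hb hgeo
    refine ⟨hsum, ?_⟩
    calc ∑' j : ℕ, η (k + 1 + j) ^ 2 ≤ ∑' j : ℕ, (C * ρ * η k ^ 2) * ρ ^ j :=
          Summable.tsum_le_tsum hb hsum hgeo
      _ = (C * ρ * η k ^ 2) * (1 - ρ)⁻¹ := by
          rw [tsum_mul_left, tsum_geometric_of_lt_one hρ0.le hρ1]
      _ = C * ρ / (1 - ρ) * η k ^ 2 := by field_simp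
  · rintro ⟨C, hC, h⟩
    have hC1 : (0:ℝ) < 1 + C := by linarith
    set ρ : ℝ := C / (1 + C) with hρdef
    have hρ0 : 0 < ρ := div_pos hC hC1
    have hρ1 : ρ < 1 := (div_lt_one hC1).2 (by linarith)
    have hρC : (1 + C) * ρ = C := by rw [hρdef, mul_div_cancel₀ _ (ne_of_gt hC1)]
    refine ⟨1 + C, ρ, by linarith, hρ0, hρ1, ?_⟩
    set T : ℕ → ℝ := fun k => ∑' j : ℕ, η (k + 1 + j) ^ 2 with hT
    have hT0 : ∀ k, 0 ≤ T k := fun k => tsum_nonneg fun j => sq_nonneg _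
    have hrec : ∀ k, T k = η (k + 1) ^ 2 + T (k + 1) := by
      intro k
      have h2 := Summable.tsum_eq_zero_add (h k).1
      have h4 : (∑' j : ℕ, η (k + 1 + (j + 1)) ^ 2) = T (k + 1) :=
        tsum_congr fun j => by rw [show k + 1 + (j + 1) = k + 1 + 1 + j from by omega]
      rw [h4] at h2
      simpa using h2
    have hstep : ∀ k, T (k + 1) ≤ ρ * T k := by
      intro k
      have h2 := (h (k + 1)).2
      have h3 := hrec k
      rw [hρdef, div_mul_eq_mul_div, le_div_iff₀ hC1]
      nlinarith [hT0 (k + 1)]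
    have hTgeo : ∀ m k, T (k + m) ≤ ρ ^ m * T k := by
      intro m
      induction m with
      | zero => intro k; simp
      | succ n ih =>
        intro k
        have h2 : k + (n + 1) = (k + n) + 1 := by omega
        rw [h2, pow_succ]
        calc T (k + n + 1) ≤ ρ * T (k + n) := hstep _
          _ ≤ ρ * (ρ ^ n * T k) := by
              exact mul_le_mul_of_nonneg_left (ih k) hρ0.le
          _ = ρ ^ n * ρ * T k := by ring
    intro j k
    cases j with
    | zero => simp; nlinarith [sq_nonneg (η k)]
    | succ m =>
      have hterm : η (k + (m + 1)) ^ 2 ≤ T (k + m) := by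
        have := Summable.le_tsum (h (k + m)).1 0 (fun i _ => sq_nonneg _)
        simpa [hT, show k + m + 1 + 0 = k + (m + 1) from by omega] using this
      calc η (k + (m + 1)) ^ 2 ≤ T (k + m) := hterm
        _ ≤ ρ ^ m * T k := hTgeo m k
        _ ≤ ρ ^ m * (C * η k ^ 2) := mul_le_mul_of_nonneg_left (h k).2 (by positivity)
        _ = (1 + C) * ρ ^ (m + 1) * η k ^ 2 := by
            have h5 : (1 + C) * ρ ^ (m + 1) = C * ρ ^ m := by
              rw [pow_succ, show (1 + C) * (ρ ^ m * ρ) = ρ ^ m * ((1 + C) * ρ) from by ring,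
                hρC]; ring
            rw [h5]; ring
end

section
/- Let Q be a set of admissible meshes with initial mesh Q₀ and refinement map refine satisfying: the child estimate #refine(Q, M) ≤ C_child #Q; and the lower bound that refinement strictly increases the number of elements. Suppose (Q_k) is a sequence of meshes generated by an adaptive algorithm with Q_{k+1} = refine(Q_k, M_k), M_k ≠ ∅, together with estimator values η_k > 0 such that sup_{k} (#Q_k)^s η_k =: B < ∞ for some s > 0. Then the approximation constant C_apx(s) := sup_{N ≥ #Q₀} min_{Q ∈ Q(N)} N^s η_Q satisfies C_apx(s) ≤ c⁻¹ B for some constant c > 0 depending only on C_child, #Q₀ and s, where Q(N) denotes all admissible meshes with at most N elements and η_Q the estimator on the mesh Q. -/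
/-- Lower bound in the optimal-convergence statement: if an adaptive sequence of
admissible meshes `(Q_k)` satisfies the child estimate `#Q_{k+1} ≤ C_child #Q_k`,
refinement strictly increases the number of elements, the estimator values are
positive, and `(#Q_k)^s η_k ≤ B` for all `k`, then the approximation constant
`C_apx(s) = sup_{N ≥ #Q₀} min_{#Q ≤ N} N^s η_Q` is bounded by `c⁻¹ B` where
`c > 0` depends only on `C_child`, `#Q₀` and `s`: for every `N ≥ #Q₀` there is an
admissible mesh `Q` with `#Q ≤ N` and `N^s η_Q ≤ c⁻¹ B`. -/
theorem approximation_constant_lower_bound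
    (Cchild s : ℝ) (n₀ : ℕ) (hCchild : 1 ≤ Cchild) (hs : 0 < s) :
    ∃ c : ℝ, 0 < c ∧
      ∀ (Mesh : Type) (card : Mesh → ℕ) (η : Mesh → ℝ) (Q₀ : Mesh)
        (Qseq : ℕ → Mesh) (B : ℝ),
        card Q₀ = n₀ →
        Qseq 0 = Q₀ →
        -- child estimate for one step of refinement:
        (∀ k, (card (Qseq (k + 1)) : ℝ) ≤ Cchild * card (Qseq k)) →
        -- refinement strictly increases the number of elements:
        (∀ k, card (Qseq k) < card (Qseq (k + 1))) →
        (∀ k, 0 < η (Qseq k)) →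
        -- `sup_k (#Q_k)^s η_k ≤ B` :
        (∀ k, (card (Qseq k) : ℝ) ^ s * η (Qseq k) ≤ B) →
        ∀ N : ℕ, n₀ ≤ N →
          ∃ Q : Mesh, card Q ≤ N ∧ (N : ℝ) ^ s * η Q ≤ c⁻¹ * B := by
  have hC0 : (0 : ℝ) < Cchild := lt_of_lt_of_le zero_lt_one hCchild
  refine ⟨(Cchild ^ s)⁻¹, inv_pos.mpr (Real.rpow_pos_of_pos hC0 s), ?_⟩
  intro Mesh card η Q₀ Qseq B h₀ hQ0 hchild hincr hη hB N hN
  -- growth: card (Qseq k) ≥ k + n₀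
  have hgrow : ∀ k, k + n₀ ≤ card (Qseq k) := by
    intro k
    induction k with
    | zero => simp [hQ0, h₀]
    | succ k ih => have := hincr k; omega
  -- choose maximal k with card (Qseq k) ≤ N
  classical
  set P : ℕ → Prop := fun k => card (Qseq k) ≤ N with hP
  have hP0 : P 0 := by simp [P, hQ0, h₀, hN]
  set k := Nat.findGreatest P N with hk
  have hPk : P k := Nat.findGreatest_spec (Nat.zero_le N) hP0
  have hknext : N < card (Qseq (k + 1)) := by
    by_cases hle : k + 1 ≤ N
    · have := Nat.findGreatest_is_greatest (Nat.lt_succ_self k) hle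
      simpa [P] using Nat.lt_of_not_le this
    · have := hgrow (k + 1)
      omega
  refine ⟨Qseq k, hPk, ?_⟩
  rw [inv_inv]
  have hcard0 : (0 : ℝ) ≤ (card (Qseq k) : ℝ) := Nat.cast_nonneg _
  have h1 : (N : ℝ) ≤ Cchild * card (Qseq k) := by
    have : (N : ℝ) < (card (Qseq (k + 1)) : ℝ) := by exact_mod_cast hknext
    linarith [hchild k]
  have h2 : (N : ℝ) ^ s ≤ Cchild ^ s * (card (Qseq k) : ℝ) ^ s := by
    rw [← Real.mul_rpow (le_of_lt hC0) hcard0]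
    exact Real.rpow_le_rpow (Nat.cast_nonneg N) h1 (le_of_lt hs)
  calc (N : ℝ) ^ s * η (Qseq k)
      ≤ Cchild ^ s * (card (Qseq k) : ℝ) ^ s * η (Qseq k) :=
        mul_le_mul_of_nonneg_right h2 (le_of_lt (hη k))
    _ = Cchild ^ s * ((card (Qseq k) : ℝ) ^ s * η (Qseq k)) := by ring
    _ ≤ Cchild ^ s * B :=
        mul_le_mul_of_nonneg_left (hB k) (le_of_lt (Real.rpow_pos_of_pos hC0 s))
end

section
/- Let Q be a hierarchical mesh that is H-admissible (respectively T-admissible) of class μ, in dimension d, constructed from nested dyadically refined tensor-product grids Q^ℓ. For elements Q, Q' ∈ 𝒬, set ℓ := min{lev(Q), lev(Q')}. If there exists a B-spline β of level ℓ (respectively of level ℓ+1) whose support intersects both Q and Q', then |lev(Q) − lev(Q')| < μ. -/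
/-! Dyadic model of hierarchical meshes (nested, dyadically refined tensor-product
grids of levels `ℓ = 0, 1, 2, …` on the unit cube) together with hierarchical
B-spline supports, multilevel support extensions, and H- and T-admissibility. -/

/-- The open dyadic cell of level `ℓ` with index `k` of the level-`ℓ` tensor-product
grid `𝒬^ℓ`. -/
def dyadicCell (d ℓ : ℕ) (k : Fin d → ℤ) : Set (Fin d → ℝ) :=
  {x | ∀ i, (k i : ℝ) / 2 ^ ℓ < x i ∧ x i < ((k i : ℝ) + 1) / 2 ^ ℓ}

/-- The closed dyadic cell of level `ℓ` with index `k`. -/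
def closedCell (d ℓ : ℕ) (k : Fin d → ℤ) : Set (Fin d → ℝ) :=
  {x | ∀ i, (k i : ℝ) / 2 ^ ℓ ≤ x i ∧ x i ≤ ((k i : ℝ) + 1) / 2 ^ ℓ}

/-- The support of the tensor-product B-spline of degree `p` and level `ℓ` whose local
knots are `j_i/2^ℓ, …, (j_i + p_i + 1)/2^ℓ` in each coordinate direction `i`. -/
def bsplineSupport (d : ℕ) (p : Fin d → ℕ) (ℓ : ℕ) (j : Fin d → ℤ) : Set (Fin d → ℝ) :=
  {x | ∀ i, (j i : ℝ) / 2 ^ ℓ ≤ x i ∧ x i ≤ ((j i : ℝ) + p i + 1) / 2 ^ ℓ}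

/-- The support extension of the level-`ℓ` cell with index `k`: the union of the
supports of all level-`ℓ` B-splines that do not vanish on the cell. -/
def suppExt (d : ℕ) (p : Fin d → ℕ) (ℓ : ℕ) (k : Fin d → ℤ) : Set (Fin d → ℝ) :=
  {x | ∀ i, ((k i : ℝ) - p i) / 2 ^ ℓ ≤ x i ∧ x i ≤ ((k i : ℝ) + p i + 1) / 2 ^ ℓ}

/-- Index of the level-`m` ancestor of the level-`ℓ` cell with index `k` (for `m ≤ ℓ`). -/
def ancestorIdx (d ℓ m : ℕ) (k : Fin d → ℤ) : Fin d → ℤ :=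
  fun i => (k i) / (2 ^ (ℓ - m) : ℤ)

/-- The multilevel support extension `S_ext(Q, m)` of the level-`ℓ` cell with index `k`
with respect to level `m ≤ ℓ`: the support extension of its level-`m` ancestor. -/
def suppExtML (d : ℕ) (p : Fin d → ℕ) (ℓ m : ℕ) (k : Fin d → ℤ) : Set (Fin d → ℝ) :=
  suppExt d p m (ancestorIdx d ℓ m k)

/-- The auxiliary region `ω^ℓ_H`: union of the closures of all level-`ℓ` cells `Q` with
`S_ext(Q, ℓ-1) ⊆ Ω^ℓ`. -/
def omegaH (d : ℕ) (p : Fin d → ℕ) (Ω : ℕ → Set (Fin d → ℝ)) (ℓ : ℕ) :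
    Set (Fin d → ℝ) :=
  ⋃ k ∈ {k : Fin d → ℤ | suppExtML d p ℓ (ℓ - 1) k ⊆ Ω ℓ}, closedCell d ℓ k

/-- The auxiliary region `ω^ℓ_T`: union of the closures of all level-`ℓ` cells `Q` with
`S_ext(Q, ℓ) ⊆ Ω^ℓ`. -/
def omegaT (d : ℕ) (p : Fin d → ℕ) (Ω : ℕ → Set (Fin d → ℝ)) (ℓ : ℕ) :
    Set (Fin d → ℝ) :=
  ⋃ k ∈ {k : Fin d → ℤ | suppExtML d p ℓ ℓ k ⊆ Ω ℓ}, closedCell d ℓ k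

/-- A hierarchy of nested subdomains `Ω⁰ ⊇ Ω¹ ⊇ … ⊇ Ω^{N-1} ⊇ Ω^N = ∅` defining a
hierarchical mesh on the unit cube, where each `Ω^{ℓ+1}` is a union of closures of
level-`ℓ` cells. -/
structure Hierarchy (d N : ℕ) where
  Ω : ℕ → Set (Fin d → ℝ)
  zero : Ω 0 = {x : Fin d → ℝ | ∀ i, 0 ≤ x i ∧ x i ≤ 1}
  nested : ∀ ℓ, Ω (ℓ + 1) ⊆ Ω ℓ
  top : Ω N = ∅
  cellUnion : ∀ ℓ < N, ∃ K : Set (Fin d → ℤ), Ω (ℓ + 1) = ⋃ k ∈ K, closedCell d ℓ k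

/-- The level-`ℓ` cell with index `k` is an (active) element of the hierarchical mesh:
it is contained in `Ω^ℓ` but not in `Ω^{ℓ+1}`. -/
def IsActive {d N : ℕ} (H : Hierarchy d N) (ℓ : ℕ) (k : Fin d → ℤ) : Prop :=
  dyadicCell d ℓ k ⊆ H.Ω ℓ ∧ ¬ dyadicCell d ℓ k ⊆ H.Ω (ℓ + 1)

/-- `H`-admissibility of class `μ`: `Ω^ℓ ⊆ ω^{ℓ-μ+1}_H` for all `ℓ ≥ μ`. -/
def HAdmissible {d N : ℕ} (p : Fin d → ℕ) (H : Hierarchy d N) (μ : ℕ) : Prop :=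
  ∀ ℓ, μ ≤ ℓ → H.Ω ℓ ⊆ omegaH d p H.Ω (ℓ - μ + 1)

/-- `T`-admissibility of class `μ`: `Ω^ℓ ⊆ ω^{ℓ-μ+1}_T` for all `ℓ ≥ μ`. -/
def TAdmissible {d N : ℕ} (p : Fin d → ℕ) (H : Hierarchy d N) (μ : ℕ) : Prop :=
  ∀ ℓ, μ ≤ ℓ → H.Ω ℓ ⊆ omegaT d p H.Ω (ℓ - μ + 1)

/-! Auxiliary lemmas -/

private lemma int_lt_of_div_lt_div {c : ℝ} (hc : 0 < c) {a b : ℤ}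
    (h : (a : ℝ) / c < (b : ℝ) / c) : a < b := by
  have h2 : (a : ℝ) < b := by
    have h3 := (div_lt_div_iff₀ hc hc).mp h
    exact lt_of_mul_lt_mul_right h3 hc.le
  exact_mod_cast h2

private lemma div_lt_div_same {a b c : ℝ} (hc : 0 < c) (h : a < b) : a / c < b / c := by
  rw [div_lt_div_iff₀ hc hc]
  exact mul_lt_mul_of_pos_right h hc

private lemma div_le_div_same {a b c : ℝ} (hc : 0 < c) (h : a ≤ b) : a / c ≤ b / c := by
  rw [div_le_div_iff₀ hc hc]
  exact mul_le_mul_of_nonneg_right h hc.le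

/-- From `A/2^ℓ < x ≤ B/2^(ℓ+1)` deduce `2A < B`. -/
private lemma helper1 {ℓ : ℕ} {A B : ℤ} {x : ℝ}
    (h1 : (A : ℝ) / 2 ^ ℓ < x) (h2 : x ≤ (B : ℝ) / 2 ^ (ℓ + 1)) : 2 * A < B := by
  have hc : (0:ℝ) < 2 ^ ℓ := by positivity
  have hc2 : (0:ℝ) < 2 ^ (ℓ + 1) := by positivity
  have h3 : (A : ℝ) / 2 ^ ℓ < (B : ℝ) / 2 ^ (ℓ + 1) := lt_of_lt_of_le h1 h2
  rw [div_lt_div_iff₀ hc hc2] at h3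
  rw [pow_succ] at h3
  have h4 : (2 * (A : ℝ)) * 2 ^ ℓ < (B : ℝ) * 2 ^ ℓ := by nlinarith
  have h5 : (2 * (A : ℝ)) < B := lt_of_mul_lt_mul_right h4 hc.le
  exact_mod_cast h5

/-- From `A/2^(ℓ+1) ≤ x < B/2^ℓ` deduce `A < 2B`. -/
private lemma helper2 {ℓ : ℕ} {A B : ℤ} {x : ℝ}
    (h1 : (A : ℝ) / 2 ^ (ℓ + 1) ≤ x) (h2 : x < (B : ℝ) / 2 ^ ℓ) : A < 2 * B := by
  have hc : (0:ℝ) < 2 ^ ℓ := by positivity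
  have hc2 : (0:ℝ) < 2 ^ (ℓ + 1) := by positivity
  have h3 : (A : ℝ) / 2 ^ (ℓ + 1) < (B : ℝ) / 2 ^ ℓ := lt_of_le_of_lt h1 h2
  rw [div_lt_div_iff₀ hc2 hc] at h3
  rw [pow_succ] at h3
  have h4 : (A : ℝ) * 2 ^ ℓ < (2 * (B : ℝ)) * 2 ^ ℓ := by nlinarith
  have h5 : (A : ℝ) < 2 * B := lt_of_mul_lt_mul_right h4 hc.le
  exact_mod_cast h5

private lemma Omega_antitone {d N : ℕ} (H : Hierarchy d N) : Antitone H.Ω :=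
  antitone_nat_of_succ_le H.nested

/-- If an open cell of level `ℓ` meets `Ω^(ℓ+1)` (a union of closed level-`ℓ` cells),
then it is contained in it. -/
private lemma active_absorb {d N : ℕ} (H : Hierarchy d N) {ℓ : ℕ} {k : Fin d → ℤ}
    (hN : ℓ < N) (hne : (dyadicCell d ℓ k ∩ H.Ω (ℓ + 1)).Nonempty) :
    dyadicCell d ℓ k ⊆ H.Ω (ℓ + 1) := by
  obtain ⟨K, hK⟩ := H.cellUnion ℓ hN
  obtain ⟨y, hyQ, hyΩ⟩ := hne
  have hc : (0:ℝ) < 2 ^ ℓ := by positivity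
  rw [hK] at hyΩ ⊢
  simp only [Set.mem_iUnion, exists_prop] at hyΩ
  obtain ⟨m, hmK, hym⟩ := hyΩ
  have hyQ' : ∀ i, (k i : ℝ) / 2 ^ ℓ < y i ∧ y i < ((k i : ℝ) + 1) / 2 ^ ℓ := hyQ
  have hym' : ∀ i, (m i : ℝ) / 2 ^ ℓ ≤ y i ∧ y i ≤ ((m i : ℝ) + 1) / 2 ^ ℓ := hym
  have hmk : m = k := by
    funext i
    obtain ⟨hm1, hm2⟩ := hym' i
    obtain ⟨hq1, hq2⟩ := hyQ' i
    have e1 : m i < k i + 1 := by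
      refine int_lt_of_div_lt_div hc ?_
      push_cast
      linarith
    have e2 : k i < m i + 1 := by
      refine int_lt_of_div_lt_div hc ?_
      push_cast
      linarith
    omega
  subst hmk
  intro z hz
  have hz' : ∀ i, (m i : ℝ) / 2 ^ ℓ < z i ∧ z i < ((m i : ℝ) + 1) / 2 ^ ℓ := hz
  have hzc : z ∈ closedCell d ℓ m := fun i => ⟨(hz' i).1.le, (hz' i).2.le⟩
  exact Set.mem_biUnion hmK hzc

private lemma lt_N_of_mem {d N : ℕ} (H : Hierarchy d N) {ℓ : ℕ} {x : Fin d → ℝ}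
    (hx : x ∈ H.Ω (ℓ + 1)) : ℓ < N := by
  by_contra hN
  push_neg at hN
  have h5 := Omega_antitone H (show N ≤ ℓ + 1 by omega) hx
  rw [H.top] at h5
  exact h5

/-- Key construction: a point strictly inside the B-spline support box which also
lies in the open cell `Q'`. -/
private lemma strict_point {d : ℕ} {p : Fin d → ℕ} {L ℓ₂ : ℕ} {j k₂ : Fin d → ℤ}
    (hne : (bsplineSupport d p L j ∩ dyadicCell d ℓ₂ k₂).Nonempty) :
    ∃ x : Fin d → ℝ, (∀ i, (j i : ℝ) / 2 ^ L < x i ∧ x i < ((j i : ℝ) + p i + 1) / 2 ^ L)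
      ∧ x ∈ dyadicCell d ℓ₂ k₂ := by
  obtain ⟨z, hzs, hzQ⟩ := hne
  have hzs' : ∀ i, (j i : ℝ) / 2 ^ L ≤ z i ∧ z i ≤ ((j i : ℝ) + p i + 1) / 2 ^ L := hzs
  have hzQ' : ∀ i, (k₂ i : ℝ) / 2 ^ ℓ₂ < z i ∧ z i < ((k₂ i : ℝ) + 1) / 2 ^ ℓ₂ := hzQ
  have hcL : (0:ℝ) < 2 ^ L := by positivity
  have hc2 : (0:ℝ) < 2 ^ ℓ₂ := by positivity
  have key : ∀ i, ∃ t : ℝ,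
      ((j i : ℝ) / 2 ^ L < t ∧ t < ((j i : ℝ) + p i + 1) / 2 ^ L) ∧
      ((k₂ i : ℝ) / 2 ^ ℓ₂ < t ∧ t < ((k₂ i : ℝ) + 1) / 2 ^ ℓ₂) := by
    intro i
    obtain ⟨hz1, hz2⟩ := hzs' i
    obtain ⟨hz3, hz4⟩ := hzQ' i
    have hp0 : (0:ℝ) ≤ (p i : ℝ) := by positivity
    have hA : (j i : ℝ) / 2 ^ L < ((j i : ℝ) + p i + 1) / 2 ^ L :=
      div_lt_div_same hcL (by linarith)
    have hB : (j i : ℝ) / 2 ^ L < ((k₂ i : ℝ) + 1) / 2 ^ ℓ₂ := lt_of_le_of_lt hz1 hz4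
    have hC : (k₂ i : ℝ) / 2 ^ ℓ₂ < ((j i : ℝ) + p i + 1) / 2 ^ L := lt_of_lt_of_le hz3 hz2
    have hD : (k₂ i : ℝ) / 2 ^ ℓ₂ < ((k₂ i : ℝ) + 1) / 2 ^ ℓ₂ :=
      div_lt_div_same hc2 (by linarith)
    have hlm : max ((j i : ℝ) / 2 ^ L) ((k₂ i : ℝ) / 2 ^ ℓ₂) <
        min (((j i : ℝ) + p i + 1) / 2 ^ L) (((k₂ i : ℝ) + 1) / 2 ^ ℓ₂) :=
      max_lt (lt_min hA hB) (lt_min hC hD)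
    refine ⟨(max ((j i : ℝ) / 2 ^ L) ((k₂ i : ℝ) / 2 ^ ℓ₂) +
       min (((j i : ℝ) + p i + 1) / 2 ^ L) (((k₂ i : ℝ) + 1) / 2 ^ ℓ₂)) / 2, ?_, ?_⟩
    · constructor
      · have h1 := le_max_left ((j i : ℝ) / 2 ^ L) ((k₂ i : ℝ) / 2 ^ ℓ₂)
        linarith
      · have h1 := min_le_left (((j i : ℝ) + p i + 1) / 2 ^ L) (((k₂ i : ℝ) + 1) / 2 ^ ℓ₂)
        linarith
    · constructor
      · have h1 := le_max_right ((j i : ℝ) / 2 ^ L) ((k₂ i : ℝ) / 2 ^ ℓ₂)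
        linarith
      · have h1 := min_le_right (((j i : ℝ) + p i + 1) / 2 ^ L) (((k₂ i : ℝ) + 1) / 2 ^ ℓ₂)
        linarith
  choose x hx1 hx2 using key
  exact ⟨x, hx1, fun i => hx2 i⟩

private lemma auxH {d N : ℕ} {p : Fin d → ℕ} {μ : ℕ} {H : Hierarchy d N}
    {ℓ₁ ℓ₂ : ℕ} {k₁ k₂ : Fin d → ℤ}
    (h₁ : IsActive H ℓ₁ k₁) (h₂ : IsActive H ℓ₂ k₂)
    (hadm : HAdmissible p H μ) {j : Fin d → ℤ}
    (hj₁ : (bsplineSupport d p ℓ₁ j ∩ dyadicCell d ℓ₁ k₁).Nonempty)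
    (hj₂ : (bsplineSupport d p ℓ₁ j ∩ dyadicCell d ℓ₂ k₂).Nonempty) :
    ℓ₂ < ℓ₁ + μ := by
  by_contra hcon
  push_neg at hcon
  obtain ⟨y, hys, hyQ⟩ := hj₁
  obtain ⟨x, hxs, hxQ⟩ := strict_point hj₂
  have hc : (0:ℝ) < 2 ^ ℓ₁ := by positivity
  have hxΩ : x ∈ H.Ω (ℓ₁ + μ) := Omega_antitone H hcon (h₂.1 hxQ)
  have hω := hadm (ℓ₁ + μ) (Nat.le_add_left μ ℓ₁) hxΩ
  have hidx : ℓ₁ + μ - μ + 1 = ℓ₁ + 1 := by omega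
  rw [hidx] at hω
  simp only [omegaH, Set.mem_iUnion, Set.mem_setOf_eq, exists_prop] at hω
  obtain ⟨r, hrsub, hxr⟩ := hω
  have hstep : ℓ₁ + 1 - 1 = ℓ₁ := by omega
  rw [hstep] at hrsub
  have hanc : ancestorIdx d (ℓ₁ + 1) ℓ₁ r = fun i => r i / 2 := by
    funext i
    have h1 : ℓ₁ + 1 - ℓ₁ = 1 := by omega
    simp [ancestorIdx, h1]
  rw [suppExtML, hanc] at hrsub
  have hxr' : ∀ i, (r i : ℝ) / 2 ^ (ℓ₁ + 1) ≤ x i ∧ x i ≤ ((r i : ℝ) + 1) / 2 ^ (ℓ₁ + 1) := hxr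
  have hys' : ∀ i, (j i : ℝ) / 2 ^ ℓ₁ ≤ y i ∧ y i ≤ ((j i : ℝ) + p i + 1) / 2 ^ ℓ₁ := hys
  have hyΩ : y ∈ H.Ω (ℓ₁ + 1) := by
    apply hrsub
    simp only [suppExt, Set.mem_setOf_eq]
    intro i
    obtain ⟨hr1, hr2⟩ := hxr' i
    obtain ⟨hs1, hs2⟩ := hxs i
    obtain ⟨hy1, hy2⟩ := hys' i
    have e1 : 2 * j i < r i + 1 := helper1 (B := r i + 1) hs1 (by push_cast; exact hr2)
    have e2 : r i < 2 * (j i + (p i : ℤ) + 1) :=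
      helper2 (B := j i + (p i : ℤ) + 1) hr1 (by push_cast; exact hs2)
    have hint : r i / 2 - (p i : ℤ) ≤ j i ∧ j i ≤ r i / 2 := by omega
    have f1 : (((r i / 2 : ℤ) : ℝ) - (p i : ℝ)) / 2 ^ ℓ₁ ≤ (j i : ℝ) / 2 ^ ℓ₁ := by
      apply div_le_div_same hc
      exact_mod_cast hint.1
    have f2 : ((j i : ℝ) + (p i : ℝ) + 1) / 2 ^ ℓ₁ ≤
        (((r i / 2 : ℤ) : ℝ) + (p i : ℝ) + 1) / 2 ^ ℓ₁ := by
      apply div_le_div_same hc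
      have hjr : (j i : ℝ) ≤ ((r i / 2 : ℤ) : ℝ) := by exact_mod_cast hint.2
      linarith
    exact ⟨le_trans f1 hy1, le_trans hy2 f2⟩
  have hN : ℓ₁ < N := lt_N_of_mem H hyΩ
  exact h₁.2 (active_absorb H hN ⟨y, hyQ, hyΩ⟩)

private lemma auxT {d N : ℕ} {p : Fin d → ℕ} {μ : ℕ} {H : Hierarchy d N}
    {ℓ₁ ℓ₂ : ℕ} {k₁ k₂ : Fin d → ℤ}
    (h₁ : IsActive H ℓ₁ k₁) (h₂ : IsActive H ℓ₂ k₂)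
    (hadm : TAdmissible p H μ) {j : Fin d → ℤ}
    (hj₁ : (bsplineSupport d p (ℓ₁ + 1) j ∩ dyadicCell d ℓ₁ k₁).Nonempty)
    (hj₂ : (bsplineSupport d p (ℓ₁ + 1) j ∩ dyadicCell d ℓ₂ k₂).Nonempty) :
    ℓ₂ < ℓ₁ + μ := by
  by_contra hcon
  push_neg at hcon
  obtain ⟨y, hys, hyQ⟩ := hj₁
  obtain ⟨x, hxs, hxQ⟩ := strict_point hj₂
  have hc2 : (0:ℝ) < 2 ^ (ℓ₁ + 1) := by positivity
  have hxΩ : x ∈ H.Ω (ℓ₁ + μ) := Omega_antitone H hcon (h₂.1 hxQ)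
  have hω := hadm (ℓ₁ + μ) (Nat.le_add_left μ ℓ₁) hxΩ
  have hidx : ℓ₁ + μ - μ + 1 = ℓ₁ + 1 := by omega
  rw [hidx] at hω
  simp only [omegaT, Set.mem_iUnion, Set.mem_setOf_eq, exists_prop] at hω
  obtain ⟨r, hrsub, hxr⟩ := hω
  have hanc : ancestorIdx d (ℓ₁ + 1) (ℓ₁ + 1) r = r := by
    funext i
    simp [ancestorIdx]
  rw [suppExtML, hanc] at hrsub
  have hxr' : ∀ i, (r i : ℝ) / 2 ^ (ℓ₁ + 1) ≤ x i ∧ x i ≤ ((r i : ℝ) + 1) / 2 ^ (ℓ₁ + 1) := hxr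
  have hys' : ∀ i, (j i : ℝ) / 2 ^ (ℓ₁ + 1) ≤ y i ∧
      y i ≤ ((j i : ℝ) + p i + 1) / 2 ^ (ℓ₁ + 1) := hys
  have hyΩ : y ∈ H.Ω (ℓ₁ + 1) := by
    apply hrsub
    simp only [suppExt, Set.mem_setOf_eq]
    intro i
    obtain ⟨hr1, hr2⟩ := hxr' i
    obtain ⟨hs1, hs2⟩ := hxs i
    obtain ⟨hy1, hy2⟩ := hys' i
    have e1 : j i < r i + 1 := by
      refine int_lt_of_div_lt_div hc2 (b := r i + 1) ?_
      push_cast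
      linarith
    have e2 : r i < j i + (p i : ℤ) + 1 := by
      refine int_lt_of_div_lt_div hc2 (b := j i + (p i : ℤ) + 1) ?_
      push_cast
      linarith
    have f1 : ((r i : ℝ) - (p i : ℝ)) / 2 ^ (ℓ₁ + 1) ≤ (j i : ℝ) / 2 ^ (ℓ₁ + 1) := by
      apply div_le_div_same hc2
      have hrj : (r i : ℝ) ≤ (j i : ℝ) + (p i : ℝ) := by
        exact_mod_cast (by omega : r i ≤ j i + (p i : ℤ))
      linarith
    have f2 : ((j i : ℝ) + (p i : ℝ) + 1) / 2 ^ (ℓ₁ + 1) ≤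
        ((r i : ℝ) + (p i : ℝ) + 1) / 2 ^ (ℓ₁ + 1) := by
      apply div_le_div_same hc2
      have hjr : (j i : ℝ) ≤ (r i : ℝ) := by exact_mod_cast (by omega : j i ≤ r i)
      linarith
    exact ⟨le_trans f1 hy1, le_trans hy2 f2⟩
  have hN : ℓ₁ < N := lt_N_of_mem H hyΩ
  exact h₁.2 (active_absorb H hN ⟨y, hyQ, hyΩ⟩)

/-- Level-difference bound on admissible hierarchical meshes: if `Q, Q'` are elements
of an `H`-admissible (resp. `T`-admissible) hierarchical mesh of class `μ` and there is
a B-spline of level `ℓ := min(lev Q, lev Q')` (resp. of level `ℓ + 1`) whose support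
intersects both `Q` and `Q'`, then `|lev Q − lev Q'| < μ`. -/
theorem level_difference_bound_of_admissible
    (d N : ℕ) (p : Fin d → ℕ) (μ : ℕ) (hμ : 1 ≤ μ) (H : Hierarchy d N)
    (ℓ₁ ℓ₂ : ℕ) (k₁ k₂ : Fin d → ℤ)
    (h₁ : IsActive H ℓ₁ k₁) (h₂ : IsActive H ℓ₂ k₂) :
    (HAdmissible p H μ →
      (∃ j : Fin d → ℤ,
        (bsplineSupport d p (min ℓ₁ ℓ₂) j ∩ dyadicCell d ℓ₁ k₁).Nonempty ∧
        (bsplineSupport d p (min ℓ₁ ℓ₂) j ∩ dyadicCell d ℓ₂ k₂).Nonempty) →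
      |(ℓ₁ : ℤ) - ℓ₂| < μ) ∧
    (TAdmissible p H μ →
      (∃ j : Fin d → ℤ,
        (bsplineSupport d p (min ℓ₁ ℓ₂ + 1) j ∩ dyadicCell d ℓ₁ k₁).Nonempty ∧
        (bsplineSupport d p (min ℓ₁ ℓ₂ + 1) j ∩ dyadicCell d ℓ₂ k₂).Nonempty) →
      |(ℓ₁ : ℤ) - ℓ₂| < μ) := by
  constructor
  · rintro hadm ⟨j, hj1, hj2⟩
    rcases le_total ℓ₁ ℓ₂ with h | h
    · rw [min_eq_left h] at hj1 hj2
      have hlt := auxH h₁ h₂ hadm hj1 hj2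
      rw [abs_sub_lt_iff]
      constructor <;> [skip; skip] <;> omega
    · rw [min_eq_right h] at hj1 hj2
      have hlt := auxH h₂ h₁ hadm hj2 hj1
      rw [abs_sub_lt_iff]
      constructor <;> [skip; skip] <;> omega
  · rintro hadm ⟨j, hj1, hj2⟩
    rcases le_total ℓ₁ ℓ₂ with h | h
    · rw [min_eq_left h] at hj1 hj2
      have hlt := auxT h₁ h₂ hadm hj1 hj2
      rw [abs_sub_lt_iff]
      constructor <;> [skip; skip] <;> omega
    · rw [min_eq_right h] at hj1 hj2
      have hlt := auxT h₂ h₁ hadm hj2 hj1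
      rw [abs_sub_lt_iff]
      constructor <;> [skip; skip] <;> omega
end

section
/- Let (η_k)_{k∈ℕ₀} be a sequence of nonnegative reals, and suppose general quasi-orthogonality holds for perturbations (d_k): for some C_qo > 0 and 0 ≤ ε_qo, ∑_{j=k}^{k+N}(d_j² − ε_qo η_j²) ≤ C_qo η_k² for all k, N; and suppose estimator reduction holds: η_{k+1}² ≤ ρ_est η_k² + C_est d_k² for all k, with 0 < ρ_est < 1 and ε_qo < (1 − ρ_est)/C_est. Then there exist C_lin ≥ 1 and 0 < ρ_lin < 1, depending only on ρ_est, C_est, C_qo, ε_qo, such that η_{k+j}² ≤ C_lin ρ_lin^j η_k² for all j, k ∈ ℕ₀. -/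
/-- Linear convergence of the estimator from general quasi-orthogonality and estimator
reduction: if `∑_{j=k}^{k+N} (d_j² − ε_qo η_j²) ≤ C_qo η_k²` for all `k, N`, and
`η_{k+1}² ≤ ρ_est η_k² + C_est d_k²` with `0 < ρ_est < 1` and
`ε_qo < (1 − ρ_est)/C_est`, then there are `C_lin ≥ 1` and `0 < ρ_lin < 1`, depending
only on `ρ_est`, `C_est`, `C_qo`, `ε_qo`, with `η_{k+j}² ≤ C_lin ρ_lin^j η_k²`. -/
theorem linear_convergence_of_quasi_orthogonality
    (ρest Cest Cqo εqo : ℝ)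
    (hρ₀ : 0 < ρest) (hρ₁ : ρest < 1) (hCest : 0 < Cest) (hCqo : 0 < Cqo)
    (hε₀ : 0 ≤ εqo) (hε₁ : εqo < (1 - ρest) / Cest) :
    ∃ Clin ρlin : ℝ, 1 ≤ Clin ∧ 0 < ρlin ∧ ρlin < 1 ∧
      ∀ η d : ℕ → ℝ, (∀ k, 0 ≤ η k) → (∀ k, 0 ≤ d k) →
        -- general quasi-orthogonality:
        (∀ k N : ℕ,
          ∑ j ∈ Finset.Icc k (k + N), (d j ^ 2 - εqo * η j ^ 2) ≤ Cqo * η k ^ 2) →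
        -- estimator reduction:
        (∀ k, η (k + 1) ^ 2 ≤ ρest * η k ^ 2 + Cest * d k ^ 2) →
        ∀ j k : ℕ, η (k + j) ^ 2 ≤ Clin * ρlin ^ j * η k ^ 2 := by
  set mu := ρest + Cest * εqo with hmudef
  have hmu0 : 0 < mu := by positivity
  have hmu1 : mu < 1 := by
    have h := (lt_div_iff₀ hCest).mp hε₁
    nlinarith
  have h1mu : 0 < 1 - mu := by linarith
  set Cp := (1 + Cest * Cqo) / (1 - mu) with hCpdef
  have hCp1 : 1 < Cp := by
    rw [hCpdef, lt_div_iff₀ h1mu]; nlinarith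
  have hCp0 : 0 < Cp := by linarith
  have hkey : (1 - mu) * Cp = 1 + Cest * Cqo := by
    rw [hCpdef]; field_simp
  have hq0 : 0 < 1 - 1 / Cp := by
    have : 1 / Cp < 1 := by
      rw [div_lt_one hCp0]; exact hCp1
    linarith
  have hq1 : 1 - 1 / Cp < 1 := by
    have : 0 < 1 / Cp := by positivity
    linarith
  refine ⟨Cp, 1 - 1 / Cp, hCp1.le, hq0, hq1, ?_⟩
  intro η d hη hd hqo hred j k
  -- quasi-orthogonality in `range` form
  have hqo' : ∀ k N : ℕ,
      ∑ i ∈ Finset.range (N + 1), (d (k + i) ^ 2 - εqo * η (k + i) ^ 2)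
        ≤ Cqo * η k ^ 2 := by
    intro k N
    have h := hqo k N
    rw [← Finset.Ico_add_one_right_eq_Icc, Finset.sum_Ico_eq_sum_range] at h
    have e : k + N + 1 - k = N + 1 := by omega
    rwa [e] at h
  -- Claim A: partial sums of η² are bounded by Cp * η k ^ 2
  have hA : ∀ k N : ℕ,
      ∑ i ∈ Finset.range (N + 1), η (k + i) ^ 2 ≤ Cp * η k ^ 2 := by
    intro k N
    induction N with
    | zero =>
        have e : ∑ i ∈ Finset.range (0 + 1), η (k + i) ^ 2 = η k ^ 2 := by simp
        rw [e]
        nlinarith [sq_nonneg (η k)]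
    | succ N ih =>
        have hsplit : ∑ i ∈ Finset.range (N + 2), η (k + i) ^ 2
            = (∑ i ∈ Finset.range (N + 1), η (k + (i + 1)) ^ 2) + η (k + 0) ^ 2 :=
          Finset.sum_range_succ' (fun i => η (k + i) ^ 2) (N + 1)
        have hT : ∑ i ∈ Finset.range (N + 1), η (k + (i + 1)) ^ 2
            ≤ ρest * (∑ i ∈ Finset.range (N + 1), η (k + i) ^ 2)
              + Cest * (∑ i ∈ Finset.range (N + 1), d (k + i) ^ 2) := by
          rw [Finset.mul_sum, Finset.mul_sum, ← Finset.sum_add_distrib]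
          apply Finset.sum_le_sum
          intro i _
          have h := hred (k + i)
          have e : k + (i + 1) = k + i + 1 := by omega
          rw [e]
          exact h
        have hD : (∑ i ∈ Finset.range (N + 1), d (k + i) ^ 2)
            ≤ Cqo * η k ^ 2 + εqo * (∑ i ∈ Finset.range (N + 1), η (k + i) ^ 2) := by
          have h := hqo' k N
          rw [Finset.sum_sub_distrib, ← Finset.mul_sum] at h
          linarith
        set S := ∑ i ∈ Finset.range (N + 1), η (k + i) ^ 2 with hS
        have hS0 : 0 ≤ S := Finset.sum_nonneg fun i _ => sq_nonneg _
        rw [hsplit]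
        have h1 : ρest * S ≤ ρest * (Cp * η k ^ 2) :=
          mul_le_mul_of_nonneg_left ih hρ₀.le
        have h2 : Cest * εqo * S ≤ Cest * εqo * (Cp * η k ^ 2) :=
          mul_le_mul_of_nonneg_left ih (by positivity)
        have h3 : Cest * (∑ i ∈ Finset.range (N + 1), d (k + i) ^ 2)
            ≤ Cest * (Cqo * η k ^ 2 + εqo * S) :=
          mul_le_mul_of_nonneg_left hD hCest.le
        simp only [Nat.add_zero]
        nlinarith [sq_nonneg (η k)]
  -- Claim B: geometric decay of partial sums
  have hB : ∀ j k N : ℕ,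
      ∑ i ∈ Finset.range (N + 1), η (k + j + i) ^ 2
        ≤ (1 - 1 / Cp) ^ j * Cp * η k ^ 2 := by
    intro j
    induction j with
    | zero =>
        intro k N
        simpa using hA k N
    | succ j ih =>
        intro k N
        have e : ∑ i ∈ Finset.range (N + 1), η (k + (j + 1) + i) ^ 2
            = (∑ i ∈ Finset.range (N + 2), η (k + j + i) ^ 2) - η (k + j) ^ 2 := by
          rw [Finset.sum_range_succ' (fun i => η (k + j + i) ^ 2) (N + 1)]
          have : ∀ i ∈ Finset.range (N + 1),
              η (k + (j + 1) + i) ^ 2 = η (k + j + (i + 1)) ^ 2 := by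
            intro i _
            congr 2
            omega
          rw [Finset.sum_congr rfl this]
          simp
        have hAk : ∑ i ∈ Finset.range (N + 2), η (k + j + i) ^ 2
            ≤ Cp * η (k + j) ^ 2 := hA (k + j) (N + 1)
        have hihN : ∑ i ∈ Finset.range (N + 2), η (k + j + i) ^ 2
            ≤ (1 - 1 / Cp) ^ j * Cp * η k ^ 2 := ih k (N + 1)
        set W := ∑ i ∈ Finset.range (N + 2), η (k + j + i) ^ 2 with hW
        have hW0 : 0 ≤ W := Finset.sum_nonneg fun i _ => sq_nonneg _
        have hstep : W - η (k + j) ^ 2 ≤ (1 - 1 / Cp) * W := by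
          have : (1 / Cp) * W ≤ η (k + j) ^ 2 := by
            rw [div_mul_eq_mul_div, one_mul, div_le_iff₀ hCp0]
            linarith [hAk]
          nlinarith
        rw [e]
        calc W - η (k + j) ^ 2 ≤ (1 - 1 / Cp) * W := hstep
          _ ≤ (1 - 1 / Cp) * ((1 - 1 / Cp) ^ j * Cp * η k ^ 2) :=
              mul_le_mul_of_nonneg_left hihN hq0.le
          _ = (1 - 1 / Cp) ^ (j + 1) * Cp * η k ^ 2 := by ring
  have h : η (k + j) ^ 2 ≤ (1 - 1 / Cp) ^ j * Cp * η k ^ 2 := by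
    simpa using hB j k 0
  calc η (k + j) ^ 2 ≤ (1 - 1 / Cp) ^ j * Cp * η k ^ 2 := h
    _ = Cp * (1 - 1 / Cp) ^ j * η k ^ 2 := by ring
end
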